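/- arXiv:1509.01355 — 2 statements merged into one kernel-verified Lean document; each statement's English description precedes it below -/
import Mathlib

section
/- Let X and Y be the vertex tree-shifts determined by n×n 0-1 matrices A_0, A_1 and B_0, B_1 respectively, each with essential graph representation. If Y is irreducible and there exist i_1, i_2 ∈ {0,1} such that A_0 ≥ B_{i_1} and A_1 ≥ B_{i_2} entrywise, then X is irreducible. -/
/-!  Tree-shifts on the binary tree: basic definitions. -/

/-- An infinite tree over alphabet `A`: a labeling of all finite words over
`Σ = {0,1}` (encoded as `List Bool`). -/
abbrev InfTree (A : Type*) : Type _ := List Bool → A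

/-- The shift map `σ_w`: `(σ_w t)_x = t_{wx}`. -/
def treeShift {A : Type*} (w : List Bool) (t : InfTree A) : InfTree A :=
  fun x => t (w ++ x)

/-- A pattern: a labeling of a finite prefix-closed set of words. -/
structure TreePattern (A : Type*) where
  supp : Finset (List Bool)
  prefixClosed : ∀ x ∈ supp, ∀ y : List Bool, y <+: x → y ∈ supp
  label : (x : List Bool) → x ∈ supp → A

/-- The pattern `p` occurs in the tree `t` rooted at the node `x`. -/
def TreePattern.occursAt {A : Type*} (p : TreePattern A) (t : InfTree A) (x : List Bool) : Prop :=
  ∀ y (hy : y ∈ p.supp), p.label y hy = t (x ++ y)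

/-- The tree-shift `X_F` defined by a set `F` of forbidden patterns. -/
def treeShiftOf {A : Type*} (F : Set (TreePattern A)) : Set (InfTree A) :=
  { t | ∀ p ∈ F, ∀ x : List Bool, ¬ p.occursAt t x }

/-- A subset of trees is a tree-shift if it is `X_F` for some forbidden set `F`. -/
def IsTreeShift {A : Type*} (X : Set (InfTree A)) : Prop :=
  ∃ F : Set (TreePattern A), X = treeShiftOf F

/-- A tree-shift of finite type: `X_F` for some finite forbidden set `F`. -/
def IsTSFT {A : Type*} (X : Set (InfTree A)) : Prop :=
  ∃ F : Set (TreePattern A), F.Finite ∧ X = treeShiftOf F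

/-- A Markov tree-shift: `X_F` for a finite forbidden set `F` consisting of 2-blocks,
i.e. patterns with support `Σ_1 = {ε, 0, 1}`. -/
def IsMarkovTS {A : Type*} (X : Set (InfTree A)) : Prop :=
  ∃ F : Set (TreePattern A), F.Finite ∧
    (∀ p ∈ F, p.supp = ({[], [false], [true]} : Finset (List Bool))) ∧
    X = treeShiftOf F

/-- The `n`-block of `t` rooted at `x` equals `u`; an `n`-block is recorded as a function
on all words, only its values on words of length `< n` (i.e. on `Σ_{n-1}`) are relevant. -/
def blockEqAt {A : Type*} (t : InfTree A) (x : List Bool) (n : ℕ) (u : List Bool → A) : Prop :=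
  ∀ y : List Bool, y.length < n → t (x ++ y) = u y

/-- `u ∈ B_n(X)` : the `n`-block `u` appears in some tree of `X`. -/
def memBlocks {A : Type*} (X : Set (InfTree A)) (n : ℕ) (u : List Bool → A) : Prop :=
  ∃ t ∈ X, ∃ x : List Bool, blockEqAt t x n u

/-- The maximal length `|P|` of a word in a finite set of words `P`. -/
def maxLen (P : Finset (List Bool)) : ℕ := P.sup List.length

/-- `P` is a complete prefix set (CPS): it is a prefix set (no word of `P` is a prefix of
another word of `P`) and every word of length at least `|P|` has a prefix in `P`. -/
def IsCPS (P : Finset (List Bool)) : Prop :=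
  (∀ p ∈ P, ∀ q ∈ P, p <+: q → p = q) ∧
  (∀ x : List Bool, maxLen P ≤ x.length → ∃ p ∈ P, p <+: x)

/-- Irreducibility of a tree-shift: any two `n`-blocks `u, v` of `X` can be realized in a
single tree of `X`, with `u` rooted at `ε` and `v` rooted at every word of a CPS whose
words have length at least `n`. -/
def IrreducibleTS {A : Type*} (X : Set (InfTree A)) : Prop :=
  ∀ n : ℕ, 0 < n → ∀ u v : List Bool → A, memBlocks X n u → memBlocks X n v →
    ∃ t ∈ X, ∃ P : Finset (List Bool), IsCPS P ∧ (∀ x ∈ P, n ≤ x.length) ∧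
      blockEqAt t [] n u ∧ ∀ x ∈ P, blockEqAt t x n v

/-- Mixing for tree-shifts: there are two CPS `P_0, P_1` connecting any two blocks, the
choice of the CPS being governed by the last letter `w_{n-1}` of `w ∈ Σ^{n-1}`. -/
def MixingTS {A : Type*} (X : Set (InfTree A)) : Prop :=
  ∃ P0 P1 : Finset (List Bool), IsCPS P0 ∧ IsCPS P1 ∧
    ∀ n m : ℕ, 0 < n → 0 < m → ∀ u v : List Bool → A,
      memBlocks X n u → memBlocks X m v →
      ∃ t ∈ X, blockEqAt t [] n u ∧
        ∀ w : List Bool, w.length = n - 1 → ∀ b : Bool, w.getLast? = some b →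
          ∀ x ∈ (if b then P1 else P0), blockEqAt t (w ++ x) m v

/-- A periodic tree: `σ_x t = t` for all `x` in some complete prefix set. -/
def IsPeriodicTree {A : Type*} (t : InfTree A) : Prop :=
  ∃ P : Finset (List Bool), IsCPS P ∧ ∀ x ∈ P, treeShift x t = t

/-- The metric on trees: `d(t,t') = 2^{-n}` where `n` is the least length of a
disagreement, and `d(t,t') = 0` if `t = t'`. -/
noncomputable def treeDist {A : Type*} (t t' : InfTree A) : ℝ :=
  haveI := Classical.propDecidable (t = t')
  if t = t' then 0
  else (2⁻¹ : ℝ) ^ sInf { n : ℕ | ∃ x : List Bool, x.length = n ∧ t x ≠ t' x }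

/-- `U` is an open subset of `X` in the topology induced by the metric `treeDist`. -/
def IsOpenIn {A : Type*} (X U : Set (InfTree A)) : Prop :=
  U ⊆ X ∧ ∀ t ∈ U, ∃ ε : ℝ, 0 < ε ∧ ∀ t' ∈ X, treeDist t t' < ε → t' ∈ U

/-- The `m`-block of `t` rooted at `x`, as a function on `Σ_{m-1}`. -/
def blockFun {A : Type*} (m : ℕ) (t : InfTree A) (x : List Bool) :
    { y : List Bool // y.length < m } → A :=
  fun y => t (x ++ y.1)

/-- `φ` is a sliding block code on `X`: it is induced by a local `m`-block map `Φ`. -/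
def IsSlidingBlockCode {A B : Type*} (X : Set (InfTree A)) (φ : InfTree A → InfTree B) : Prop :=
  ∃ m : ℕ, 0 < m ∧ ∃ Φ : ({ y : List Bool // y.length < m } → A) → B,
    ∀ t ∈ X, ∀ x : List Bool, φ t x = Φ (blockFun m t x)

/-- `φ` is a conjugacy from `X` onto `Y`: an invertible sliding block code whose inverse
is also a sliding block code. -/
def IsConjugacy {A B : Type*} (X : Set (InfTree A)) (Y : Set (InfTree B))
    (φ : InfTree A → InfTree B) : Prop :=
  IsSlidingBlockCode X φ ∧ Set.MapsTo φ X Y ∧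
    ∃ ψ : InfTree B → InfTree A, IsSlidingBlockCode Y ψ ∧ Set.MapsTo ψ Y X ∧
      (∀ t ∈ X, ψ (φ t) = t) ∧ (∀ s ∈ Y, φ (ψ s) = s)

/-- The `m`-th higher block code `φ_m`, sending `t` to the tree of `m`-blocks of `t`. -/
def higherBlockMap {A : Type*} (m : ℕ) (t : InfTree A) :
    InfTree ({ y : List Bool // y.length < m } → A) :=
  fun x => blockFun m t x

/-- The vertex tree-shift determined by two transition matrices `A_0, A_1`. -/
def vertexTreeShift {n : ℕ} (A0 A1 : Matrix (Fin n) (Fin n) ℕ) : Set (InfTree (Fin n)) :=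
  { t | ∀ x : List Bool,
      A0 (t x) (t (x ++ [false])) = 1 ∧ A1 (t x) (t (x ++ [true])) = 1 }

/-- `A_x = A_{x_l} A_{x_{l-1}} ⋯ A_{x_1}` for a word `x = x_1 … x_l`. -/
def matWord {n : ℕ} (A0 A1 : Matrix (Fin n) (Fin n) ℕ) :
    List Bool → Matrix (Fin n) (Fin n) ℕ
  | [] => 1
  | b :: rest => matWord A0 A1 rest * (if b then A1 else A0)

/-- A 0-1 matrix. -/
def ZeroOne {n : ℕ} (M : Matrix (Fin n) (Fin n) ℕ) : Prop := ∀ i j, M i j ≤ 1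

/-- The graph representation of the pair `(A_0, A_1)` is essential: every row and every
column of each matrix contains a nonzero entry. -/
def EssentialPair {n : ℕ} (A0 A1 : Matrix (Fin n) (Fin n) ℕ) : Prop :=
  (∀ i, ∃ j, 0 < A0 i j) ∧ (∀ j, ∃ i, 0 < A0 i j) ∧
  (∀ i, ∃ j, 0 < A1 i j) ∧ (∀ j, ∃ i, 0 < A1 i j)

/-- An irreducible nonnegative matrix. -/
def MatIrreducible {n : ℕ} (A : Matrix (Fin n) (Fin n) ℕ) : Prop :=
  ∀ i j, ∃ k : ℕ, 1 ≤ k ∧ 0 < (A ^ k) i j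

/-- A primitive nonnegative matrix. -/
def MatPrimitive {n : ℕ} (A : Matrix (Fin n) (Fin n) ℕ) : Prop :=
  ∃ k : ℕ, 1 ≤ k ∧ ∀ i j, 0 < (A ^ k) i j

/-- `V_w`: the set of possible terminal states of the labeled path `w`. -/
def Vset {n : ℕ} (M : Matrix (Fin n) (Fin n) ℕ) : Set (Fin n) := { j | ∃ i, 0 < M i j }

/-- A cycle: a word `w = w_1 … w_k` with `k ≥ 2`, `w_k = w_1` and `V_w = V_{w_1}`. -/
def IsCycle {n : ℕ} (A0 A1 : Matrix (Fin n) (Fin n) ℕ) (w : List Bool) : Prop :=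
  2 ≤ w.length ∧ w.getLast? = w.head? ∧
    Vset (matWord A0 A1 w) = Vset (matWord A0 A1 (w.take 1))

/-!
Each tree of `Y` relabels, through a letter map `g` with `B_{g(b)} ≤ A_b`, into a tree of `X`,
so irreducibility of `Y` applied to `1`-blocks gives, for every symbol `c` and every tree `b` of
`X`, a tree of `X` rooted at `c` that agrees with `b` below each node of some CPS (the preimage
under `g` of the CPS found in `Y`, where `b` is grafted in). Grafting these trees at depth `m`
below a tree carrying the `m`-block `u` connects `u` to every `m`-block `v`, along the CPS
obtained by composing the level set of depth `m` with the CPSs of the grafted trees.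
-/

def IsPrefixSet (P : Finset (List Bool)) : Prop :=
  ∀ p ∈ P, ∀ q ∈ P, p <+: q → p = q

def wordsOfLength (m : ℕ) : Finset (List Bool) :=
  (Finset.univ : Finset (List.Vector Bool m)).image List.Vector.toList

theorem mem_wordsOfLength {m : ℕ} {x : List Bool} : x ∈ wordsOfLength m ↔ x.length = m := by
  rw [wordsOfLength, Finset.mem_image]
  exact ⟨fun ⟨w, _, hw⟩ => hw ▸ w.toList_length,
    fun h => ⟨⟨x, h⟩, Finset.mem_univ _, rfl⟩⟩

theorem le_maxLen {P : Finset (List Bool)} {p : List Bool} (hp : p ∈ P) : p.length ≤ maxLen P :=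
  Finset.le_sup hp

theorem IsCPS.nonempty {P : Finset (List Bool)} (hP : IsCPS P) : P.Nonempty :=
  let ⟨p, hp, _⟩ := hP.2 (List.replicate (maxLen P) false) (by simp)
  ⟨p, hp⟩

theorem isCPS_wordsOfLength (m : ℕ) : IsCPS (wordsOfLength m) := by
  have hmax : m ≤ maxLen (wordsOfLength m) := by
    simpa using le_maxLen (mem_wordsOfLength.2 (List.length_replicate (n := m) (a := false)))
  refine ⟨fun p hp q hq hpq => hpq.eq_of_length ?_, fun x hx => ?_⟩
  · rw [mem_wordsOfLength.1 hp, mem_wordsOfLength.1 hq]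
  · exact ⟨x.take m, mem_wordsOfLength.2 (by simp; omega), List.take_prefix _ _⟩

def wordPreimage (g : Bool → Bool) (Q : Finset (List Bool)) : Finset (List Bool) :=
  Q.biUnion fun q => (wordsOfLength q.length).filter (·.map g = q)

theorem mem_wordPreimage {g : Bool → Bool} {Q : Finset (List Bool)} {p : List Bool} :
    p ∈ wordPreimage g Q ↔ p.map g ∈ Q := by
  simp only [wordPreimage, Finset.mem_biUnion, Finset.mem_filter, mem_wordsOfLength]
  exact ⟨fun ⟨q, hq, _, hpq⟩ => hpq ▸ hq, fun h => ⟨_, h, by simp, rfl⟩⟩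

theorem IsCPS.wordPreimage {Q : Finset (List Bool)} (hQ : IsCPS Q) (g : Bool → Bool) :
    IsCPS (wordPreimage g Q) := by
  refine ⟨fun p hp q hq hpq => hpq.eq_of_length ?_, fun x hx => ?_⟩
  · have := hQ.1 _ (mem_wordPreimage.1 hp) _ (mem_wordPreimage.1 hq) (hpq.map g)
    simpa using congrArg List.length this
  -- pad `x` so that its image is long enough to have a prefix in `Q`
  set x' := x ++ List.replicate (maxLen Q) false
  obtain ⟨q, hq, hq_pre⟩ := hQ.2 (x'.map g) (by simp [x'])
  have hpq : (x'.take q.length).map g = q := by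
    rw [List.map_take]; exact (List.prefix_iff_eq_take.1 hq_pre).symm
  have hp : x'.take q.length ∈ _root_.wordPreimage g Q :=
    mem_wordPreimage.2 (by rw [hpq]; exact hq)
  have hqx : q.length ≤ x.length := by
    have hlen : (x'.take q.length).length = q.length := by simpa using congrArg List.length hpq
    have := le_maxLen hp
    omega
  refine ⟨_, hp, ?_⟩
  rw [List.take_append_of_le_length hqx]
  exact List.take_prefix _ _

def cpsConcat (P : Finset (List Bool)) (Q : List Bool → Finset (List Bool)) :
    Finset (List Bool) :=
  P.biUnion fun p => (Q p).image (p ++ ·)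

theorem mem_cpsConcat {P : Finset (List Bool)} {Q : List Bool → Finset (List Bool)}
    {x : List Bool} : x ∈ cpsConcat P Q ↔ ∃ p ∈ P, ∃ q ∈ Q p, p ++ q = x := by
  simp only [cpsConcat, Finset.mem_biUnion, Finset.mem_image]

theorem add_maxLen_le_maxLen_cpsConcat {P : Finset (List Bool)}
    {Q : List Bool → Finset (List Bool)} {p : List Bool} (hp : p ∈ P) (hQ : (Q p).Nonempty) :
    p.length + maxLen (Q p) ≤ maxLen (cpsConcat P Q) := by
  obtain ⟨q, hq, hqmax⟩ := Finset.exists_mem_eq_sup _ hQ List.length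
  rw [maxLen, hqmax, ← List.length_append]
  exact le_maxLen (mem_cpsConcat.2 ⟨p, hp, q, hq, rfl⟩)

theorem IsCPS.cpsConcat {P : Finset (List Bool)} {Q : List Bool → Finset (List Bool)}
    (hP : IsCPS P) (hQ : ∀ p ∈ P, IsCPS (Q p)) : IsCPS (cpsConcat P Q) := by
  refine ⟨?_, fun x hx => ?_⟩
  · rintro _ hx₁ _ hx₂ h
    obtain ⟨p₁, hp₁, q₁, hq₁, rfl⟩ := mem_cpsConcat.1 hx₁
    obtain ⟨p₂, hp₂, q₂, hq₂, rfl⟩ := mem_cpsConcat.1 hx₂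
    obtain rfl : p₁ = p₂ := by
      rcases List.prefix_or_prefix_of_prefix ((List.prefix_append _ _).trans h)
        (List.prefix_append _ _) with h' | h'
      exacts [hP.1 _ hp₁ _ hp₂ h', (hP.1 _ hp₂ _ hp₁ h').symm]
    rw [(hQ _ hp₁).1 _ hq₁ _ hq₂ ((List.prefix_append_right_inj _).1 h)]
  have hlen : ∀ p ∈ P, p.length + maxLen (Q p) ≤ x.length := fun p hp =>
    (add_maxLen_le_maxLen_cpsConcat hp (hQ p hp).nonempty).trans hx
  obtain ⟨p, hp, z, rfl⟩ :=
    hP.2 x (Finset.sup_le fun p hp => (Nat.le_add_right _ _).trans (hlen p hp))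
  obtain ⟨q, hq, hqz⟩ := (hQ p hp).2 z (by have := hlen p hp; simp at this; omega)
  exact ⟨_, mem_cpsConcat.2 ⟨p, hp, q, hq, rfl⟩, (List.prefix_append_right_inj p).2 hqz⟩

section Graft

variable {A : Type*}

noncomputable def graft (P : Finset (List Bool)) (a : InfTree A) (b : List Bool → InfTree A) :
    InfTree A := fun x =>
  haveI := Classical.propDecidable (∃ p ∈ P, p <+: x)
  if h : ∃ p ∈ P, p <+: x then b h.choose (x.drop h.choose.length) else a x

variable {P : Finset (List Bool)} {a : InfTree A} {b : List Bool → InfTree A}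

theorem graft_append (hP : IsPrefixSet P) {p : List Bool} (hp : p ∈ P) (z : List Bool) :
    graft P a b (p ++ z) = b p z := by
  have h : ∃ q ∈ P, q <+: p ++ z := ⟨p, hp, z, rfl⟩
  obtain ⟨hq, hqp⟩ := h.choose_spec
  have : h.choose = p := by
    rcases List.prefix_or_prefix_of_prefix hqp (List.prefix_append p z) with h' | h'
    exacts [hP _ hq _ hp h', (hP _ hp _ hq h').symm]
  simp only [graft, dif_pos h, this, List.drop_left]

theorem graft_of_not_prefix {x : List Bool} (h : ¬ ∃ p ∈ P, p <+: x) : graft P a b x = a x :=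
  dif_neg h

theorem graft_of_forall_prefix_eq (hP : IsPrefixSet P) (hb : ∀ p ∈ P, b p [] = a p)
    {x : List Bool} (hx : ∀ p ∈ P, p <+: x → p = x) : graft P a b x = a x := by
  by_cases h : ∃ p ∈ P, p <+: x
  · obtain ⟨p, hp, hpx⟩ := h
    obtain rfl := hx p hp hpx
    simpa [hb p hp] using graft_append (b := b) (a := a) hP hp []
  · exact graft_of_not_prefix h

end Graft

section VertexTreeShift

variable {n : ℕ} {A0 A1 : Matrix (Fin n) (Fin n) ℕ}

theorem mem_vertexTreeShift_iff {t : InfTree (Fin n)} :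
    t ∈ vertexTreeShift A0 A1 ↔
      ∀ x (b : Bool), (if b then A1 else A0) (t x) (t (x ++ [b])) = 1 :=
  ⟨fun h x b => by cases b; exacts [(h x).1, (h x).2], fun h x => ⟨h x false, h x true⟩⟩

theorem treeShift_mem_vertexTreeShift {t : InfTree (Fin n)} (ht : t ∈ vertexTreeShift A0 A1)
    (w : List Bool) : treeShift w t ∈ vertexTreeShift A0 A1 := fun x => by
  simpa only [treeShift, List.append_assoc] using ht (w ++ x)

theorem exists_mem_vertexTreeShift_root (h0 : ZeroOne A0) (h1 : ZeroOne A1)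
    (hess : EssentialPair A0 A1) (c : Fin n) : ∃ t ∈ vertexTreeShift A0 A1, t [] = c := by
  have hrow : ∀ (b : Bool) i, ∃ j, (if b then A1 else A0) i j = 1 := by
    rintro (_ | _) i
    · obtain ⟨j, hj⟩ := hess.1 i; exact ⟨j, le_antisymm (h0 _ _) hj⟩
    · obtain ⟨j, hj⟩ := hess.2.2.1 i; exact ⟨j, le_antisymm (h1 _ _) hj⟩
  choose next hnext using hrow
  refine ⟨fun x => x.foldl (fun i b => next b i) c,
    mem_vertexTreeShift_iff.2 fun x b => ?_, rfl⟩
  simpa only [List.foldl_append, List.foldl_cons, List.foldl_nil] using hnext b _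

theorem map_mem_vertexTreeShift {B0 B1 : Matrix (Fin n) (Fin n) ℕ} (hA0 : ZeroOne A0)
    (hA1 : ZeroOne A1) {g : Bool → Bool}
    (hg : ∀ b i j, (if g b then B1 else B0) i j ≤ (if b then A1 else A0) i j)
    {s : InfTree (Fin n)} (hs : s ∈ vertexTreeShift B0 B1) :
    (fun x => s (x.map g)) ∈ vertexTreeShift A0 A1 := by
  refine mem_vertexTreeShift_iff.2 fun x b => le_antisymm ?_ ?_
  · cases b; exacts [hA0 _ _, hA1 _ _]
  · have hle := hg b (s (x.map g)) (s (x.map g ++ [g b]))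
    rw [mem_vertexTreeShift_iff.1 hs (x.map g) (g b)] at hle
    simpa only [List.map_append, List.map_cons, List.map_nil] using hle

theorem graft_mem_vertexTreeShift {P : Finset (List Bool)} (hP : IsPrefixSet P)
    {a : InfTree (Fin n)} {b : List Bool → InfTree (Fin n)} (ha : a ∈ vertexTreeShift A0 A1)
    (hb : ∀ p ∈ P, b p ∈ vertexTreeShift A0 A1) (hba : ∀ p ∈ P, b p [] = a p) :
    graft P a b ∈ vertexTreeShift A0 A1 := by
  refine mem_vertexTreeShift_iff.2 fun x c => ?_
  by_cases h : ∃ p ∈ P, p <+: x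
  · obtain ⟨p, hp, z, rfl⟩ := h
    rw [List.append_assoc, graft_append hP hp, graft_append hP hp]
    exact mem_vertexTreeShift_iff.1 (hb p hp) z c
  · have hxc : ∀ p ∈ P, p <+: x ++ [c] → p = x ++ [c] := fun p hp hpx =>
      (List.prefix_concat_iff.1 hpx).resolve_right fun h' => h ⟨p, hp, h'⟩
    rw [graft_of_not_prefix h, graft_of_forall_prefix_eq hP hba hxc]
    exact mem_vertexTreeShift_iff.1 ha x c

end VertexTreeShift

def Connects {A : Type*} (X : Set (InfTree A)) (c : A) (b : InfTree A) : Prop :=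
  ∃ t ∈ X, t [] = c ∧ ∃ P : Finset (List Bool), IsCPS P ∧ ∀ p ∈ P, treeShift p t = b

theorem IrreducibleTS.exists_root_cps {A : Type*} {X : Set (InfTree A)} (hX : IrreducibleTS X)
    (hroot : ∀ c, ∃ t ∈ X, t [] = c) (c d : A) :
    ∃ t ∈ X, t [] = c ∧ ∃ Q : Finset (List Bool), IsCPS Q ∧ ∀ q ∈ Q, t q = d := by
  have hblock : ∀ c, memBlocks X 1 fun _ => c := fun c =>
    let ⟨t, ht, htc⟩ := hroot c
    ⟨t, ht, [], fun y hy => by rw [List.length_eq_zero_iff.1 (Nat.lt_one_iff.1 hy)]; exact htc⟩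
  obtain ⟨t, ht, Q, hQ, -, htc, htd⟩ := hX 1 one_pos _ _ (hblock c) (hblock d)
  exact ⟨t, ht, htc [] Nat.one_pos, Q, hQ, fun q hq => by simpa using htd q hq [] Nat.one_pos⟩

theorem connects_vertexTreeShift {n : ℕ} {A0 A1 : Matrix (Fin n) (Fin n) ℕ} {g : Bool → Bool}
    {s : InfTree (Fin n)} (hs : (fun x => s (x.map g)) ∈ vertexTreeShift A0 A1)
    {Q : Finset (List Bool)} (hQ : IsCPS Q) {b : InfTree (Fin n)} (hsQ : ∀ q ∈ Q, s q = b [])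
    (hb : b ∈ vertexTreeShift A0 A1) : Connects (vertexTreeShift A0 A1) (s []) b := by
  have hP := (hQ.wordPreimage g).1
  have hba : ∀ p ∈ wordPreimage g Q, b [] = s (p.map g) := fun p hp =>
    (hsQ _ (mem_wordPreimage.1 hp)).symm
  refine ⟨graft (wordPreimage g Q) _ fun _ => b, graft_mem_vertexTreeShift hP hs (fun _ _ => hb)
    hba, graft_of_forall_prefix_eq hP hba fun p _ hp => List.prefix_nil.1 hp,
    _, hQ.wordPreimage g, fun p hp => funext (graft_append hP hp)⟩

theorem irreducibleTS_vertexTreeShift_of_connects {n : ℕ} {A0 A1 : Matrix (Fin n) (Fin n) ℕ}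
    (h : ∀ c, ∀ b ∈ vertexTreeShift A0 A1, Connects (vertexTreeShift A0 A1) c b) :
    IrreducibleTS (vertexTreeShift A0 A1) := by
  intro m _ u v ⟨tu, htu, xu, hu⟩ ⟨tv, htv, xv, hv⟩
  set a := treeShift xu tu
  choose r hr hr_root P hP hrP using fun c => h c _ (treeShift_mem_vertexTreeShift htv xv)
  have hW := isCPS_wordsOfLength m
  refine ⟨graft (wordsOfLength m) a fun w => r (a w),
    graft_mem_vertexTreeShift hW.1 (treeShift_mem_vertexTreeShift htu xu) (fun _ _ => hr _)
      (fun _ _ => hr_root _), _, hW.cpsConcat fun w _ => hP (a w), ?_, fun y hy => ?_, ?_⟩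
  · simp only [mem_cpsConcat, mem_wordsOfLength]
    rintro _ ⟨w, rfl, p, -, rfl⟩
    simp
  · rw [List.nil_append, graft_of_not_prefix fun ⟨w, hw, hwy⟩ => by
      have := hwy.length_le; rw [mem_wordsOfLength.1 hw] at this; omega]
    exact hu y hy
  · simp only [mem_cpsConcat, mem_wordsOfLength]
    rintro _ ⟨w, hw, p, hp, rfl⟩ y hy
    rw [List.append_assoc, graft_append hW.1 (mem_wordsOfLength.2 hw)]
    exact (congrFun (hrP _ p hp) y).trans (hv y hy)

theorem vertexTreeShift_irreducible_of_dominates_general {n : ℕ}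
    (A0 A1 B0 B1 : Matrix (Fin n) (Fin n) ℕ)
    (hA0 : ZeroOne A0) (hA1 : ZeroOne A1) (hB0 : ZeroOne B0) (hB1 : ZeroOne B1)
    (hessB : EssentialPair B0 B1)
    (hYirr : IrreducibleTS (vertexTreeShift B0 B1))
    (hdom : ∃ i1 i2 : Bool,
      (∀ i j, (if i1 then B1 else B0) i j ≤ A0 i j) ∧
      (∀ i j, (if i2 then B1 else B0) i j ≤ A1 i j)) :
    IrreducibleTS (vertexTreeShift A0 A1) := by
  obtain ⟨i1, i2, hd0, hd1⟩ := hdom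
  have hlift : ∀ s ∈ vertexTreeShift B0 B1,
      (fun x => s (x.map fun b => if b then i2 else i1)) ∈ vertexTreeShift A0 A1 :=
    fun _ => map_mem_vertexTreeShift hA0 hA1 (by rintro (_ | _) <;> assumption)
  refine irreducibleTS_vertexTreeShift_of_connects fun c b hb => ?_
  obtain ⟨s, hs, rfl, Q, hQ, hsQ⟩ :=
    hYirr.exists_root_cps (exists_mem_vertexTreeShift_root hB0 hB1 hessB) c (b [])
  exact connects_vertexTreeShift (hlift s hs) hQ hsQ hb

/-- domination of the matrices of an irreducible vertex tree-shift yields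
irreducibility. -/
theorem vertexTreeShift_irreducible_of_dominates {n : ℕ}
    (A0 A1 B0 B1 : Matrix (Fin n) (Fin n) ℕ)
    (hA0 : ZeroOne A0) (hA1 : ZeroOne A1) (hB0 : ZeroOne B0) (hB1 : ZeroOne B1)
    (hessA : EssentialPair A0 A1) (hessB : EssentialPair B0 B1)
    (hYirr : IrreducibleTS (vertexTreeShift B0 B1))
    (hdom : ∃ i1 i2 : Bool,
      (∀ i j, (if i1 then B1 else B0) i j ≤ A0 i j) ∧
      (∀ i j, (if i2 then B1 else B0) i j ≤ A1 i j)) :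
    IrreducibleTS (vertexTreeShift A0 A1) :=
  vertexTreeShift_irreducible_of_dominates_general A0 A1 B0 B1 hA0 hA1 hB0 hB1 hessB hYirr hdom
end

section
/- Let X be the vertex tree-shift determined by 2×2 0-1 matrices A_0 and A_1. If A_0 and A_1 are both irreducible and A_0 A_1 = A_1 A_0, then X is irreducible. -/
section Aux

/-- Flip on `Fin 2`. -/
def flip2 : Fin 2 → Fin 2 := fun a => if a = 0 then 1 else 0

lemma flip2_ne (a : Fin 2) : flip2 a ≠ a := by fin_cases a <;> simp [flip2]

lemma eq_flip2_of_ne {a b : Fin 2} (h : a ≠ b) : b = flip2 a := by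
  fin_cases a <;> fin_cases b <;> simp_all [flip2]

lemma offdiag_one {A : Matrix (Fin 2) (Fin 2) ℕ} (hz : ZeroOne A) (hi : MatIrreducible A) :
    A 0 1 = 1 ∧ A 1 0 = 1 := by
  constructor
  · by_contra h
    have h0 : A 0 1 = 0 := by have := hz 0 1; omega
    have key : ∀ k : ℕ, (A ^ k) 0 1 = 0 := by
      intro k
      induction k with
      | zero => simp [Matrix.one_apply]
      | succ k ih =>
        rw [pow_succ, Matrix.mul_apply, Fin.sum_univ_two, ih, h0]
        ring
    obtain ⟨k, -, hk⟩ := hi 0 1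
    rw [key k] at hk; exact absurd hk (lt_irrefl 0)
  · by_contra h
    have h0 : A 1 0 = 0 := by have := hz 1 0; omega
    have key : ∀ k : ℕ, (A ^ k) 1 0 = 0 := by
      intro k
      induction k with
      | zero => simp [Matrix.one_apply]
      | succ k ih =>
        rw [pow_succ, Matrix.mul_apply, Fin.sum_univ_two, ih, h0]
        ring
    obtain ⟨k, -, hk⟩ := hi 1 0
    rw [key k] at hk; exact absurd hk (lt_irrefl 0)

lemma vts_shift {A0 A1 : Matrix (Fin 2) (Fin 2) ℕ} {t : InfTree (Fin 2)}
    (ht : t ∈ vertexTreeShift A0 A1) (x : List Bool) :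
    treeShift x t ∈ vertexTreeShift A0 A1 := by
  intro y
  have := ht (x ++ y)
  simpa [treeShift, List.append_assoc] using this

/-- Words of length `k` as a Finset. -/
def wordsOfLen (k : ℕ) : Finset (List Bool) :=
  Finset.image List.ofFn (Finset.univ : Finset (Fin k → Bool))

lemma mem_wordsOfLen {k : ℕ} {l : List Bool} : l ∈ wordsOfLen k ↔ l.length = k := by
  simp only [wordsOfLen, Finset.mem_image, Finset.mem_univ, true_and]
  constructor
  · rintro ⟨f, rfl⟩; simp
  · intro h; subst h; exact ⟨l.get, List.ofFn_get l⟩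

/-- The connecting tree: `u`-side tree `s` on depths `< n`, then a one- or two-step
connector to copies of the `v`-side tree `s'`. -/
def connTree (n : ℕ) (s s' : InfTree (Fin 2)) : InfTree (Fin 2) := fun y =>
  if y.length < n then s y
  else if s (y.take (n-1)) = s' [] ∧ (y.drop (n-1)).length = 1 then flip2 (s' [])
  else s' ((y.drop (n-1)).drop (if s (y.take (n-1)) = s' [] then 2 else 1))

lemma connTree_short {n : ℕ} {s s' : InfTree (Fin 2)} {y : List Bool} (h : y.length < n) :
    connTree n s s' y = s y := if_pos h

lemma connTree_long {n : ℕ} {s s' : InfTree (Fin 2)} {w z : List Bool}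
    (hw : w.length = n - 1) (hn : 0 < n) (hz : z ≠ []) :
    connTree n s s' (w ++ z) =
      if s w = s' [] ∧ z.length = 1 then flip2 (s' [])
      else s' (z.drop (if s w = s' [] then 2 else 1)) := by
  have hzl : 1 ≤ z.length := by
    cases z with
    | nil => exact absurd rfl hz
    | cons a l => simp
  have hlen : ¬ (w ++ z).length < n := by
    simp only [List.length_append, hw]; omega
  have ht : (w ++ z).take (n-1) = w := List.take_left' hw
  have hd : (w ++ z).drop (n-1) = z := List.drop_left' hw
  simp only [connTree, if_neg hlen, ht, hd]

end Aux
/-- a vertex tree-shift over two symbols whose transition matrices are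
irreducible and commute is irreducible. -/
theorem vertexTreeShift_irreducible_of_two_by_two_commute
    (A0 A1 : Matrix (Fin 2) (Fin 2) ℕ) (h0 : ZeroOne A0) (h1 : ZeroOne A1)
    (hi0 : MatIrreducible A0) (hi1 : MatIrreducible A1)
    (hcomm : A0 * A1 = A1 * A0) :
    IrreducibleTS (vertexTreeShift A0 A1) := by
  intro n hn u v hu hv
  obtain ⟨t0, ht0, x0, hbu⟩ := hu
  obtain ⟨t1, ht1, x1, hbv⟩ := hv
  have hs : treeShift x0 t0 ∈ vertexTreeShift A0 A1 := vts_shift ht0 x0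
  have hs' : treeShift x1 t1 ∈ vertexTreeShift A0 A1 := vts_shift ht1 x1
  set s : InfTree (Fin 2) := treeShift x0 t0 with hsdef
  set s' : InfTree (Fin 2) := treeShift x1 t1 with hs'def
  have hsu : ∀ y : List Bool, y.length < n → s y = u y := fun y hy => hbu y hy
  have hsv : ∀ y : List Bool, y.length < n → s' y = v y := fun y hy => hbv y hy
  -- off-diagonal entries are 1
  obtain ⟨hA001, hA010⟩ := offdiag_one h0 hi0
  obtain ⟨hA101, hA110⟩ := offdiag_one h1 hi1
  -- the connecting tree lies in the tree-shift
  have key : ∀ (x : List Bool) (c : Bool),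
      (if c then A1 else A0) (connTree n s s' x) (connTree n s s' (x ++ [c])) = 1 := by
    intro x c
    set M : Matrix (Fin 2) (Fin 2) ℕ := if c then A1 else A0 with hM
    have hMs : ∀ (t : InfTree (Fin 2)), t ∈ vertexTreeShift A0 A1 →
        ∀ y : List Bool, M (t y) (t (y ++ [c])) = 1 := by
      intro t ht y
      have := ht y
      cases c
      · simpa [hM] using this.1
      · simpa [hM] using this.2
    have hstep0 : ∀ a : Fin 2, M a (flip2 a) = 1 := by
      intro a
      cases c <;> fin_cases a <;> simp_all [hM, flip2]
    have hstepb : ∀ a : Fin 2, M (flip2 a) a = 1 := by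
      intro a
      cases c <;> fin_cases a <;> simp_all [hM, flip2]
    rcases lt_trichotomy (x.length + 1) n with hlt | heq | hgt
    · -- both inside the u-block
      rw [connTree_short (by omega : x.length < n),
          connTree_short (by simpa using hlt)]
      exact hMs s hs x
    · -- boundary: x at depth n-1
      have hxl : x.length = n - 1 := by omega
      rw [connTree_short (by omega : x.length < n)]
      have hc := connTree_long (s := s) (s' := s') hxl hn (by simp : ([c] : List Bool) ≠ [])
      rw [show x ++ [c] = x ++ [c] from rfl, hc]
      by_cases hxb : s x = s' []
      · simp only [hxb, List.length_cons, List.length_nil, and_self, if_pos, if_true]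
        simpa using hstep0 (s' [])
      · simp only [hxb, false_and, if_false, if_neg hxb, List.drop_one]
        have : (s' (List.tail [c])) = s' [] := by simp
        rw [this, eq_flip2_of_ne hxb]
        exact hstep0 (s x)
    · -- deep region
      have hxn : n ≤ x.length := by omega
      set w : List Bool := x.take (n-1) with hw
      set z : List Bool := x.drop (n-1) with hz
      have hwl : w.length = n - 1 := by simp [hw]; omega
      have hzl : 1 ≤ z.length := by simp [hz]; omega
      have hxwz : x = w ++ z := (List.take_append_drop (n-1) x).symm
      have hzne : z ≠ [] := by intro h; rw [h] at hzl; simp at hzl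
      have hczne : z ++ [c] ≠ [] := by simp
      have h1' := connTree_long (s := s) (s' := s') hwl hn hzne
      have h2' : connTree n s s' (x ++ [c]) =
          (if s w = s' [] ∧ (z ++ [c]).length = 1 then flip2 (s' [])
           else s' ((z ++ [c]).drop (if s w = s' [] then 2 else 1))) := by
        rw [hxwz, List.append_assoc]
        exact connTree_long (s := s) (s' := s') hwl hn hczne
      rw [h2', hxwz, h1']
      by_cases hwb : s w = s' []
      · by_cases hz1 : z.length = 1
        · have hzc2 : (z ++ [c]).length = 2 := by simp [hz1]
          have hdrop : (z ++ [c]).drop 2 = [] := by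
            rw [← hzc2]; exact List.drop_length
          simp only [hwb, hz1, and_self, if_true, true_and, hzc2]
          rw [if_neg (by omega : ¬ (2 : ℕ) = 1), hdrop]
          exact hstepb (s' [])
        · have hz2 : 2 ≤ z.length := by omega
          have hzc1 : ¬ (z ++ [c]).length = 1 := by
            simp only [List.length_append, List.length_cons, List.length_nil]
            omega
          have hc1 : ¬ (s w = s' [] ∧ z.length = 1) := fun h => hz1 h.2
          have hc2 : ¬ (s w = s' [] ∧ (z ++ [c]).length = 1) := fun h => hzc1 h.2
          rw [if_neg hc1, if_neg hc2, if_pos hwb]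
          rw [List.drop_append_of_le_length hz2]
          exact hMs s' hs' (z.drop 2)
      · have hc1 : ¬ (s w = s' [] ∧ z.length = 1) := fun h => hwb h.1
        have hc2 : ¬ (s w = s' [] ∧ (z ++ [c]).length = 1) := fun h => hwb h.1
        rw [if_neg hc1, if_neg hc2, if_neg hwb]
        rw [List.drop_append_of_le_length hzl]
        exact hMs s' hs' (z.drop 1)
  have hT : connTree n s s' ∈ vertexTreeShift A0 A1 := by
    intro x
    exact ⟨by simpa using key x false, by simpa using key x true⟩
  -- the CPS
  set dd : List Bool → ℕ := fun w => if s w = s' [] then 2 else 1 with hdd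
  have hdd1 : ∀ w, 1 ≤ dd w := by intro w; simp only [hdd]; split <;> omega
  have hdd2 : ∀ w, dd w ≤ 2 := by intro w; simp only [hdd]; split <;> omega
  set P : Finset (List Bool) :=
    (wordsOfLen (n-1)).biUnion
      (fun w => (wordsOfLen (dd w)).image (fun z => w ++ z)) with hP
  have memP : ∀ x : List Bool, x ∈ P ↔
      ∃ w, w.length = n - 1 ∧ ∃ z, z.length = dd w ∧ x = w ++ z := by
    intro x
    simp only [hP, Finset.mem_biUnion, Finset.mem_image, mem_wordsOfLen]
    constructor
    · rintro ⟨w, hw, z, hzl, rfl⟩; exact ⟨w, hw, z, hzl, rfl⟩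
    · rintro ⟨w, hw, z, hzl, rfl⟩; exact ⟨w, hw, z, hzl, rfl⟩
  have hlenP : ∀ x ∈ P, n ≤ x.length := by
    intro x hx
    obtain ⟨w, hw, z, hzl, rfl⟩ := (memP x).1 hx
    have := hdd1 w
    simp [hw, hzl]; omega
  have hmaxP : ∀ w : List Bool, w.length = n - 1 → n - 1 + dd w ≤ maxLen P := by
    intro w hw
    have hm : w ++ List.replicate (dd w) false ∈ P := by
      rw [memP]
      exact ⟨w, hw, List.replicate (dd w) false, by simp, rfl⟩
    have := Finset.le_sup (f := List.length) hm
    simpa [maxLen, hw] using this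
  refine ⟨connTree n s s', hT, P, ⟨?_, ?_⟩, hlenP, ?_, ?_⟩
  · -- prefix set
    intro p hp q hq hpq
    obtain ⟨w, hw, z, hzl, rfl⟩ := (memP p).1 hp
    obtain ⟨w', hw', z', hzl', rfl⟩ := (memP q).1 hq
    obtain ⟨r, hr⟩ := hpq
    have hww' : w = w' := by
      have h1'' : (w' ++ z').take (n-1) = w' := List.take_left' hw'
      rw [← hr, List.append_assoc] at h1''
      rw [List.take_left' hw] at h1''
      exact h1''
    subst hww'
    have hzz' : z <+: z' := by
      refine ⟨r, ?_⟩
      have := hr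
      rw [List.append_assoc] at this
      exact List.append_cancel_left this
    have : z = z' := hzz'.eq_of_length (by rw [hzl, hzl'])
    rw [this]
  · -- completeness
    intro x hx
    have hmn : n ≤ maxLen P := by
      have := hmaxP (List.replicate (n-1) false) (by simp)
      have := hdd1 (List.replicate (n-1) false)
      omega
    have hxn : n ≤ x.length := le_trans hmn hx
    set w : List Bool := x.take (n-1) with hw
    have hwl : w.length = n - 1 := by simp [hw]; omega
    have hxd : n - 1 + dd w ≤ x.length := le_trans (hmaxP w hwl) hx
    refine ⟨x.take (n - 1 + dd w), ?_, List.take_prefix _ x⟩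
    rw [memP]
    refine ⟨w, hwl, (x.drop (n-1)).take (dd w), ?_, ?_⟩
    · simp; omega
    · rw [List.take_add]
  · -- u at the root
    intro y hy
    simp only [List.nil_append]
    rw [connTree_short hy]
    exact hsu y hy
  · -- v at each element of P
    intro x hx y hy
    obtain ⟨w, hw, z, hzl, rfl⟩ := (memP x).1 hx
    have hzyne : z ++ y ≠ [] := by
      have h1 := hdd1 w
      intro h
      have h2 : z.length + y.length = 0 := by
        have := congrArg List.length h
        simpa using this
      omega
    rw [List.append_assoc, connTree_long hw hn hzyne]
    by_cases hwb : s w = s' []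
    · have hz2 : z.length = 2 := by simp [hdd, hwb] at hzl; exact hzl
      have : ¬ (z ++ y).length = 1 := by
        simp only [List.length_append, hz2]; omega
      rw [if_neg (by tauto), if_pos hwb, List.drop_left' hz2]
      exact hsv y hy
    · have hz1 : z.length = 1 := by simp [hdd, hwb] at hzl; exact hzl
      rw [if_neg (by tauto), if_neg hwb, List.drop_left' hz1]
      exact hsv y hy
end
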